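/- arXiv:math/0507569 — 3 statements merged into one kernel-verified Lean document; each statement's English description precedes it below -/
import Mathlib

section
/- (Weyl–van der Corput inequality) Let K be a positive integer and let z_k ∈ ℂ be complex numbers for k = K+1, …, 2K. Then for any positive integer Q ≤ K, |∑_{K < k ≤ 2K} z_k|² ≤ ((K+Q)/Q) · Re( ∑_{|q| < Q} (1 − |q|/Q) ∑_{k : K < k ≤ 2K, K < k+q ≤ 2K} z_k · conj(z_{k+q}) ). -/
/-!
Average the sum `S = ∑ f k` over the `Q` shifts `k = m + r`, `0 < r ≤ Q`: with the window sums
`T m = ∑_{0 < r ≤ Q} f (m + r)` one gets `Q • S = ∑_m T m`, where only the `N + Q - 1` values of `m`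
whose window meets the support of `f` contribute. Cauchy–Schwarz over these `m` gives
`Q² ‖S‖² ≤ (N + Q) ∑_m ‖T m‖²`, and expanding `‖T m‖² = ∑_{r,s} f (m + r) conj f (m + s)` and summing
over `m` first turns the right-hand side into the autocorrelations at lag `q = s - r`, each occurring
for `Q - |q|` pairs `(r, s)`.
-/

open Finset ComplexConjugate

section Shifts

variable {M : Type*}

theorem sum_Ioc_comp_add_of_support [AddCommMonoid M] {f : ℤ → M} {a b c d r : ℤ}
    (hf : ∀ k ∉ Ioc a b, f k = 0) (hc : c + r ≤ a) (hd : b ≤ d + r) :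
    ∑ m ∈ Ioc c d, f (m + r) = ∑ k ∈ Ioc a b, f k := by
  have shift : ∑ m ∈ Ioc c d, f (m + r) = ∑ k ∈ Ioc (c + r) (d + r), f k := by
    rw [← map_add_right_Ioc, sum_map]
    rfl
  rw [shift]
  refine (sum_subset (fun k hk => ?_) fun k _ hk => hf k hk).symm
  simp only [mem_Ioc] at hk ⊢
  omega

theorem card_filter_add_mem_Ioc {Q : ℕ} {q : ℤ} (hq : q ∈ Ioo (-(Q : ℤ)) Q) :
    (#{r ∈ Ioc 0 (Q : ℤ) | q + r ∈ Ioc 0 (Q : ℤ)} : ℤ) = Q - |q| := by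
  rw [mem_Ioo] at hq
  rcases le_total 0 q with hq₀ | hq₀
  · have : {r ∈ Ioc 0 (Q : ℤ) | q + r ∈ Ioc 0 (Q : ℤ)} = Ioc 0 (Q - q) := by
      ext r
      simp only [mem_filter, mem_Ioc]
      omega
    rw [this, Int.card_Ioc, abs_of_nonneg hq₀]
    omega
  · have : {r ∈ Ioc 0 (Q : ℤ) | q + r ∈ Ioc 0 (Q : ℤ)} = Ioc (-q) Q := by
      ext r
      simp only [mem_filter, mem_Ioc]
      omega
    rw [this, Int.card_Ioc, abs_of_nonpos hq₀]
    omega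

theorem sum_Ioc_sum_Ioc_comp_sub [AddCommGroup M] (Q : ℕ) (g : ℤ → M) :
    ∑ r ∈ Ioc 0 (Q : ℤ), ∑ s ∈ Ioc 0 (Q : ℤ), g (s - r) =
      ∑ q ∈ Ioo (-(Q : ℤ)) Q, (Q - |q|) • g q := by
  have inner : ∀ r ∈ Ioc 0 (Q : ℤ), ∑ s ∈ Ioc 0 (Q : ℤ), g (s - r) =
      ∑ q ∈ Ioo (-(Q : ℤ)) Q, if q + r ∈ Ioc 0 (Q : ℤ) then g q else 0 := by
    intro r hr
    rw [← sum_filter]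
    refine sum_nbij' (· - r) (· + r) (fun s hs => ?_) (fun q hq => ?_) (fun s _ => by simp)
      (fun q _ => by simp) fun s _ => rfl
    · simp only [mem_Ioc, mem_filter, mem_Ioo] at hr hs ⊢
      omega
    · simp only [mem_filter, mem_Ioc] at hq ⊢
      omega
  rw [sum_congr rfl inner, sum_comm]
  refine sum_congr rfl fun q hq => ?_
  rw [← sum_filter, sum_const, ← natCast_zsmul, card_filter_add_mem_Ioc hq]

noncomputable def windowSum [AddCommMonoid M] (f : ℤ → M) (Q : ℕ) (m : ℤ) : M :=
  ∑ r ∈ Ioc 0 (Q : ℤ), f (m + r)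

theorem sum_windowSum [AddCommMonoid M] {f : ℤ → M} {a : ℤ} {N Q : ℕ}
    (hf : ∀ k ∉ Ioc a (a + N), f k = 0) :
    ∑ m ∈ Ioc (a - Q) (a + N - 1), windowSum f Q m = Q • ∑ k ∈ Ioc a (a + N), f k := by
  have hshift : ∀ r ∈ Ioc 0 (Q : ℤ),
      ∑ m ∈ Ioc (a - Q) (a + N - 1), f (m + r) = ∑ k ∈ Ioc a (a + N), f k := by
    intro r hr
    rw [mem_Ioc] at hr
    exact sum_Ioc_comp_add_of_support hf (by omega) (by omega)
  simp only [windowSum]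
  rw [sum_comm, sum_congr rfl hshift, sum_const, Int.card_Ioc, sub_zero, Int.toNat_natCast]

end Shifts

section VanDerCorput

variable {f : ℤ → ℂ} {a : ℤ} {N Q : ℕ}

theorem sum_norm_windowSum_sq (hf : ∀ k ∉ Ioc a (a + N), f k = 0) :
    ∑ m ∈ Ioc (a - Q) (a + N - 1), ‖windowSum f Q m‖ ^ 2 =
      (∑ q ∈ Ioo (-(Q : ℤ)) Q, (Q - |q|) • ∑ k ∈ Ioc a (a + N), f k * conj (f (k + q))).re := by
  have hnorm : ∀ m, ‖windowSum f Q m‖ ^ 2 =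
      (∑ r ∈ Ioc 0 (Q : ℤ), ∑ s ∈ Ioc 0 (Q : ℤ), f (m + r) * conj (f (m + s))).re := by
    intro m
    rw [windowSum, ← sum_mul_sum, ← map_sum, Complex.mul_conj, Complex.normSq_eq_norm_sq,
      Complex.ofReal_re]
  have hshift : ∀ r ∈ Ioc 0 (Q : ℤ), ∀ s ∈ Ioc 0 (Q : ℤ),
      ∑ m ∈ Ioc (a - Q) (a + N - 1), f (m + r) * conj (f (m + s)) =
        ∑ k ∈ Ioc a (a + N), f k * conj (f (k + (s - r))) := by
    intro r hr s _
    rw [mem_Ioc] at hr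
    simp_rw [show ∀ m, m + s = m + r + (s - r) by intro m; ring]
    exact sum_Ioc_comp_add_of_support (f := fun k => f k * conj (f (k + (s - r))))
      (fun k hk => by simp [hf k hk]) (by omega) (by omega)
  simp_rw [hnorm, ← Complex.re_sum]
  rw [sum_comm, ← sum_Ioc_sum_Ioc_comp_sub]
  congr 1
  refine sum_congr rfl fun r hr => ?_
  rw [sum_comm]
  exact sum_congr rfl (hshift r hr)

theorem sq_mul_norm_sum_sq_le (hf : ∀ k ∉ Ioc a (a + N), f k = 0) :
    (Q : ℝ) ^ 2 * ‖∑ k ∈ Ioc a (a + N), f k‖ ^ 2 ≤ (N + Q) *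
      (∑ q ∈ Ioo (-(Q : ℤ)) Q, (Q - |q|) • ∑ k ∈ Ioc a (a + N), f k * conj (f (k + q))).re := by
  set J := Ioc (a - Q) (a + N - 1)
  have hJ : (#J : ℝ) ≤ N + Q := by
    have : #J ≤ N + Q := by
      rw [Int.card_Ioc]
      omega
    exact_mod_cast this
  calc (Q : ℝ) ^ 2 * ‖∑ k ∈ Ioc a (a + N), f k‖ ^ 2
      = ‖∑ m ∈ J, windowSum f Q m‖ ^ 2 := by
        rw [sum_windowSum hf, nsmul_eq_mul, norm_mul, mul_pow, Complex.norm_natCast]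
    _ ≤ #J * ∑ m ∈ J, ‖windowSum f Q m‖ ^ 2 :=
        (pow_le_pow_left₀ (norm_nonneg _) (norm_sum_le _ _) 2).trans sq_sum_le_card_mul_sum_sq
    _ ≤ (N + Q) * ∑ m ∈ J, ‖windowSum f Q m‖ ^ 2 := by gcongr
    _ = _ := by rw [sum_norm_windowSum_sq hf]

theorem norm_sum_Ioc_sq_le_of_support (hf : ∀ k ∉ Ioc a (a + N), f k = 0) (hQ : 0 < Q) :
    ‖∑ k ∈ Ioc a (a + N), f k‖ ^ 2 ≤ ((N + Q : ℝ) / Q) *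
      (∑ q ∈ Ioo (-(Q : ℤ)) Q, ((1 - (|q| : ℝ) / Q : ℝ) : ℂ) *
        ∑ k ∈ Ioc a (a + N), f k * conj (f (k + q))).re := by
  have hcoef : ∀ (q : ℤ) (w : ℂ),
      ((1 - (|q| : ℝ) / Q : ℝ) : ℂ) * w = (((Q : ℝ)⁻¹ : ℝ) : ℂ) * ((Q - |q|) • w) := by
    intro q w
    have : (1 - (|q| : ℝ) / Q : ℝ) = (Q : ℝ)⁻¹ * ((Q - |q| : ℤ) : ℝ) := by
      push_cast
      field_simp
    rw [zsmul_eq_mul, ← mul_assoc, this, Complex.ofReal_mul, Complex.ofReal_intCast]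
  simp_rw [hcoef, ← mul_sum, Complex.re_ofReal_mul]
  calc ‖∑ k ∈ Ioc a (a + N), f k‖ ^ 2
      = (Q : ℝ) ^ 2 * ‖∑ k ∈ Ioc a (a + N), f k‖ ^ 2 / Q ^ 2 := by field_simp
    _ ≤ (N + Q) * (∑ q ∈ Ioo (-(Q : ℤ)) Q,
          (Q - |q|) • ∑ k ∈ Ioc a (a + N), f k * conj (f (k + q))).re / Q ^ 2 :=
        div_le_div_of_nonneg_right (sq_mul_norm_sum_sq_le hf) (by positivity)
    _ = _ := by ring

end VanDerCorput

theorem weyl_van_der_corput_general (K : ℕ) (z : ℤ → ℂ)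
    (Q : ℕ) (hQ : 0 < Q) :
    ‖∑ k ∈ Finset.Ioc (K : ℤ) (2 * K), z k‖ ^ 2 ≤
      ((K + Q : ℝ) / Q) *
        (∑ q ∈ Finset.Ioo (-(Q : ℤ)) (Q : ℤ),
          ((1 - (|q| : ℝ) / Q : ℝ) : ℂ) *
            ∑ k ∈ (Finset.Ioc (K : ℤ) (2 * K)).filter
                (fun k => (K : ℤ) < k + q ∧ k + q ≤ 2 * K),
              z k * (starRingEnd ℂ) (z (k + q))).re := by
  rw [two_mul]
  set A := Ioc (K : ℤ) (K + K)
  set f := Set.indicator (A : Set ℤ) z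
  have hf : ∀ k ∉ A, f k = 0 := fun k hk => Set.indicator_of_notMem (mem_coe.not.mpr hk) z
  have hfA : ∀ k ∈ A, f k = z k := fun k hk => Set.indicator_of_mem (mem_coe.mpr hk) z
  have hcorr : ∀ q : ℤ, ∑ k ∈ A, f k * conj (f (k + q)) =
      ∑ k ∈ A with (K : ℤ) < k + q ∧ k + q ≤ K + K, z k * conj (z (k + q)) := by
    intro q
    rw [sum_filter]
    refine sum_congr rfl fun k hk => ?_
    rw [hfA k hk]
    split_ifs with hkq
    · rw [hfA _ (mem_Ioc.mpr hkq)]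
    · rw [hf _ (mem_Ioc.not.mpr hkq), map_zero, mul_zero]
  rw [← sum_congr rfl hfA]
  simp_rw [← hcorr]
  exact norm_sum_Ioc_sq_le_of_support hf hQ

/-- The Weyl–van der Corput inequality. -/
theorem weyl_van_der_corput (K : ℕ) (hK : 0 < K) (z : ℤ → ℂ)
    (Q : ℕ) (hQ : 0 < Q) (hQK : Q ≤ K) :
    ‖∑ k ∈ Finset.Ioc (K : ℤ) (2 * K), z k‖ ^ 2 ≤
      ((K + Q : ℝ) / Q) *
        (∑ q ∈ Finset.Ioo (-(Q : ℤ)) (Q : ℤ),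
          ((1 - (|q| : ℝ) / Q : ℝ) : ℂ) *
            ∑ k ∈ (Finset.Ioc (K : ℤ) (2 * K)).filter
                (fun k => (K : ℤ) < k + q ∧ k + q ≤ 2 * K),
              z k * (starRingEnd ℂ) (z (k + q))).re :=
  weyl_van_der_corput_general K z Q hQ
end

section
/- There is an absolute constant C such that for all N ≥ 2, all real H ≥ 1, and all N₁ with N < N₁ ≤ 2N, the sum Σ₁ := ∑_{N < n ≤ N₁} Λ(n) ∑_{0 < |h| ≤ H} (1/(2πih)) [ e(h·Li(n)) − e(h·Li(n+1)) ] satisfies |Σ₁| ≤ (C/log N) · max_{N < N₂ ≤ 2N} ∑_{1 ≤ h ≤ H} | ∑_{N < n ≤ N₂} Λ(n) e(h·Li(n)) |. -/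
/-!
Writing `e(h Li(n+1)) = e(h Li(n)) e(h δₙ)` with `δₙ = Li(n+1) - Li(n)`, the inner sum of `Σ₁` is
`∑ₕ Λ(n) e(h Li(n)) wₕ(δₙ)` with `wₕ(x) = (1 - e(hx)) / (2πih)`. Each `wₕ` is `1`-Lipschitz and
vanishes at `0`, and `δₙ` is nonnegative, decreasing and at most `1 / log N` for `n > N`, because
`1 / log` is decreasing. Summation by parts in `n` therefore bounds `|Σ₁|` by `δ_{N+1}` times the
largest value, over the cut-offs `N₂`, of `∑_{0<|h|≤H} |∑_{N<n≤N₂} Λ(n) e(h Li(n))|`; as `Λ` and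
`Li` are real, the terms for `h` and `-h` are conjugate, so this is twice the maximum in the claim.
-/

open Real Finset ArithmeticFunction

noncomputable section

/-- The logarithmic integral `Li(x) = ∫₂ˣ dt / log t`. -/
noncomputable def Li (x : ℝ) : ℝ := ∫ t in (2:ℝ)..x, 1 / Real.log t

/-- `e(x) = exp(2πix)`. -/
noncomputable def e (x : ℝ) : ℂ := Complex.exp (2 * Real.pi * Complex.I * x)

section SummationByParts

variable {R : Type*}

theorem Finset.sum_Ioc_mul_eq_by_parts [Ring R] (a w : ℕ → R) {N m : ℕ} (hNm : N ≤ m) :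
    ∑ n ∈ Ioc N m, a n * w n =
      (∑ n ∈ Ioc N m, a n) * w (m + 1) +
        ∑ k ∈ Ioc N m, (∑ n ∈ Ioc N k, a n) * (w k - w (k + 1)) := by
  induction m, hNm using Nat.le_induction with
  | base => simp
  | succ m hNm ih =>
    simp only [sum_Ioc_succ_top hNm, ih, mul_sub, add_mul]
    abel

theorem Finset.sum_Ioc_sub' {G : Type*} [AddCommGroup G] (f : ℕ → G) {N m : ℕ} (hNm : N ≤ m) :
    ∑ k ∈ Ioc N m, (f k - f (k + 1)) = f (N + 1) - f (m + 1) := by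
  induction m, hNm using Nat.le_induction with
  | base => simp
  | succ m hNm ih =>
    rw [sum_Ioc_succ_top hNm, ih]
    abel

variable [SeminormedRing R]

theorem norm_sum_Ioc_mul_le (a w : ℕ → R) (δ : ℕ → ℝ) {N m : ℕ} (hNm : N ≤ m)
    (hw : ‖w (m + 1)‖ ≤ δ (m + 1))
    (hdw : ∀ k ∈ Ioc N m, ‖w k - w (k + 1)‖ ≤ δ k - δ (k + 1)) :
    ‖∑ n ∈ Ioc N m, a n * w n‖ ≤
      ‖∑ n ∈ Ioc N m, a n‖ * δ (m + 1) +
        ∑ k ∈ Ioc N m, ‖∑ n ∈ Ioc N k, a n‖ * (δ k - δ (k + 1)) := by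
  rw [sum_Ioc_mul_eq_by_parts a w hNm]
  refine (norm_add_le _ _).trans (add_le_add ?_ ?_)
  · exact (norm_mul_le _ _).trans (by gcongr)
  · refine (norm_sum_le _ _).trans (sum_le_sum fun k hk => ?_)
    exact (norm_mul_le _ _).trans (by gcongr; exact hdw k hk)

theorem norm_sum_sum_Ioc_mul_le {ι : Type*} (A : Finset ι) (a w : ι → ℕ → R) (δ : ℕ → ℝ)
    {N m : ℕ} (hNm : N < m) (M : ℝ) (hδ₀ : 0 ≤ δ (m + 1))
    (hδ : ∀ k ∈ Ioc N m, δ (k + 1) ≤ δ k)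
    (hw : ∀ i ∈ A, ‖w i (m + 1)‖ ≤ δ (m + 1))
    (hdw : ∀ i ∈ A, ∀ k ∈ Ioc N m, ‖w i k - w i (k + 1)‖ ≤ δ k - δ (k + 1))
    (hM : ∀ k ∈ Ioc N m, ∑ i ∈ A, ‖∑ n ∈ Ioc N k, a i n‖ ≤ M) :
    ‖∑ i ∈ A, ∑ n ∈ Ioc N m, a i n * w i n‖ ≤ M * δ (N + 1) := by
  calc ‖∑ i ∈ A, ∑ n ∈ Ioc N m, a i n * w i n‖
      ≤ ∑ i ∈ A, (‖∑ n ∈ Ioc N m, a i n‖ * δ (m + 1) +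
          ∑ k ∈ Ioc N m, ‖∑ n ∈ Ioc N k, a i n‖ * (δ k - δ (k + 1))) :=
        (norm_sum_le _ _).trans <| sum_le_sum fun i hi =>
          norm_sum_Ioc_mul_le _ _ δ hNm.le (hw i hi) (hdw i hi)
    _ = (∑ i ∈ A, ‖∑ n ∈ Ioc N m, a i n‖) * δ (m + 1) +
          ∑ k ∈ Ioc N m, (∑ i ∈ A, ‖∑ n ∈ Ioc N k, a i n‖) * (δ k - δ (k + 1)) := by
        simp only [sum_add_distrib, sum_mul]
        rw [sum_comm]
    _ ≤ M * δ (m + 1) + ∑ k ∈ Ioc N m, M * (δ k - δ (k + 1)) := by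
        gcongr with k hk
        · exact hM m (right_mem_Ioc.mpr hNm)
        · linarith [hδ k hk]
        · exact hM k hk
    _ = M * δ (N + 1) := by
        rw [← mul_sum, sum_Ioc_sub' δ hNm.le]
        ring

end SummationByParts

section UnitIntervalIntegrals

variable {f : ℝ → ℝ} {a : ℝ}

theorem AntitoneOn.intervalIntegrable_of_le (hf : AntitoneOn f (Set.Ici a)) {x y : ℝ}
    (hx : a ≤ x) (hy : a ≤ y) : IntervalIntegrable f MeasureTheory.volume x y :=
  (hf.mono fun _ ht => (le_min hx hy).trans ht.1).intervalIntegrable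

theorem AntitoneOn.integral_add_one_le (hf : AntitoneOn f (Set.Ici a)) {x : ℝ} (hx : a ≤ x) :
    ∫ t in x..x + 1, f t ≤ f x := by
  calc ∫ t in x..x + 1, f t ≤ ∫ _ in x..x + 1, f x :=
        intervalIntegral.integral_mono_on (by linarith)
          (hf.intervalIntegrable_of_le hx (by linarith)) intervalIntegrable_const
          fun t ht => hf hx (hx.trans ht.1) ht.1
    _ = f x := by simp

theorem AntitoneOn.antitoneOn_integral_add_one (hf : AntitoneOn f (Set.Ici a)) :
    AntitoneOn (fun x => ∫ t in x..x + 1, f t) (Set.Ici a) := by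
  intro x (hx : a ≤ x) y (hy : a ≤ y) hxy
  have hshift : ∫ t in y..y + 1, f t = ∫ t in x..x + 1, f (t + (y - x)) := by
    rw [intervalIntegral.integral_comp_add_right]; ring_nf
  have hint : IntervalIntegrable (fun t => f (t + (y - x))) MeasureTheory.volume x (x + 1) := by
    have h := (hf.intervalIntegrable_of_le hy (by linarith : a ≤ y + 1)).comp_add_right (y - x)
    rwa [sub_sub_cancel, show y + 1 - (y - x) = x + 1 by ring] at h
  change ∫ t in y..y + 1, f t ≤ ∫ t in x..x + 1, f t
  rw [hshift]
  exact intervalIntegral.integral_mono_on (by linarith) hint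
    (hf.intervalIntegrable_of_le hx (by linarith)) fun t ht =>
      hf (hx.trans ht.1) (show a ≤ t + (y - x) by linarith [ht.1]) (by linarith)

end UnitIntervalIntegrals

theorem antitoneOn_one_div_log : AntitoneOn (fun t : ℝ => 1 / log t) (Set.Ici 2) :=
  fun x (hx : 2 ≤ x) _ _ hxy =>
    one_div_le_one_div_of_le (log_pos (by linarith)) (log_le_log (by linarith) hxy)

theorem Li_sub_Li {x y : ℝ} (hx : 2 ≤ x) (hy : 2 ≤ y) : Li y - Li x = ∫ t in x..y, 1 / log t :=
  intervalIntegral.integral_interval_sub_left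
    (antitoneOn_one_div_log.intervalIntegrable_of_le le_rfl hy)
    (antitoneOn_one_div_log.intervalIntegrable_of_le le_rfl hx)

theorem Li_add_one_sub_Li {x : ℝ} (hx : 2 ≤ x) : Li (x + 1) - Li x = ∫ t in x..x + 1, 1 / log t :=
  Li_sub_Li hx (by linarith)

theorem Li_add_one_sub_Li_nonneg {x : ℝ} (hx : 2 ≤ x) : 0 ≤ Li (x + 1) - Li x := by
  rw [Li_add_one_sub_Li hx]
  exact intervalIntegral.integral_nonneg (by linarith) fun t ht =>
    one_div_nonneg.mpr (log_nonneg (by linarith [ht.1]))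

theorem Li_add_one_sub_Li_le {x : ℝ} (hx : 2 ≤ x) : Li (x + 1) - Li x ≤ 1 / log x := by
  rw [Li_add_one_sub_Li hx]
  exact antitoneOn_one_div_log.integral_add_one_le hx

theorem antitoneOn_Li_add_one_sub_Li : AntitoneOn (fun x => Li (x + 1) - Li x) (Set.Ici 2) :=
  fun x hx y hy hxy => by
    simpa only [Li_add_one_sub_Li hx, Li_add_one_sub_Li hy] using
      antitoneOn_one_div_log.antitoneOn_integral_add_one hx hy hxy

section ExponentialPhases

open Complex ComplexConjugate

theorem e_eq_exp_mul_I (x : ℝ) : e x = exp (↑(2 * π * x) * I) := by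
  rw [e]; push_cast; ring_nf

theorem norm_e (x : ℝ) : ‖e x‖ = 1 := by
  rw [e_eq_exp_mul_I, norm_exp_ofReal_mul_I]

theorem e_add (x y : ℝ) : e (x + y) = e x * e y := by
  rw [e, e, e, ← Complex.exp_add]; push_cast; ring_nf

theorem e_neg (x : ℝ) : e (-x) = conj (e x) := by
  rw [e, e, ← exp_conj]; simp [map_ofNat]

theorem norm_e_sub_one_le (x : ℝ) : ‖e x - 1‖ ≤ 2 * π * |x| := by
  have h := norm_exp_I_mul_ofReal_sub_one_le (x := 2 * π * x)
  rwa [mul_comm I, ← e_eq_exp_mul_I, Real.norm_eq_abs, abs_mul,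
    abs_of_pos two_pi_pos] at h

theorem norm_sum_ofReal_mul_e_neg_mul (s : Finset ℕ) (a φ : ℕ → ℝ) (x : ℝ) :
    ‖∑ n ∈ s, (a n : ℂ) * e (-x * φ n)‖ = ‖∑ n ∈ s, (a n : ℂ) * e (x * φ n)‖ := by
  have hconj : ∑ n ∈ s, (a n : ℂ) * e (-x * φ n) = conj (∑ n ∈ s, (a n : ℂ) * e (x * φ n)) := by
    simp only [map_sum, map_mul, conj_ofReal, neg_mul, e_neg]
  rw [hconj, RCLike.norm_conj]

def eWeight (h : ℤ) (x : ℝ) : ℂ := 1 / (2 * π * I * h) * (1 - e (h * x))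

theorem one_div_mul_e_sub_e (h : ℤ) (x y : ℝ) :
    1 / (2 * π * I * h) * (e (h * x) - e (h * y)) = e (h * x) * eWeight h (y - x) := by
  rw [eWeight, show (h : ℝ) * y = h * x + h * (y - x) by ring, e_add]
  ring

theorem eWeight_zero (h : ℤ) : eWeight h 0 = 0 := by
  simp [eWeight, e]

theorem norm_eWeight_sub_le {h : ℤ} (hh : h ≠ 0) (x y : ℝ) :
    ‖eWeight h x - eWeight h y‖ ≤ |x - y| := by
  have hpos : 0 < 2 * π * |(h : ℝ)| := by positivity
  have hdiff : eWeight h x - eWeight h y =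
      1 / (2 * π * I * h) * e (h * y) * (1 - e (h * (x - y))) := by
    rw [eWeight, eWeight, show (h : ℝ) * x = h * y + h * (x - y) by ring, e_add]
    ring
  have hnorm : ‖2 * π * I * (h : ℂ)‖ = 2 * π * |(h : ℝ)| := by
    simp [abs_of_pos pi_pos]
  rw [hdiff, norm_mul, norm_mul, norm_e, mul_one, norm_sub_rev, norm_div, norm_one, hnorm, one_div,
    inv_mul_le_iff₀ hpos]
  calc ‖e (h * (x - y)) - 1‖ ≤ 2 * π * |h * (x - y)| := norm_e_sub_one_le _
    _ = 2 * π * |(h : ℝ)| * |x - y| := by rw [abs_mul]; ring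

theorem norm_eWeight_le {h : ℤ} (hh : h ≠ 0) (x : ℝ) : ‖eWeight h x‖ ≤ |x| := by
  simpa [eWeight_zero] using norm_eWeight_sub_le hh x 0

theorem norm_sum_sum_Ioc_mul_eWeight_le (A : Finset ℤ) (hA : ∀ h ∈ A, h ≠ 0) (a : ℤ → ℕ → ℂ)
    (δ : ℕ → ℝ) {N m : ℕ} (hNm : N < m) (M : ℝ) (hδ₀ : 0 ≤ δ (m + 1))
    (hδ : ∀ k ∈ Ioc N m, δ (k + 1) ≤ δ k)
    (hM : ∀ k ∈ Ioc N m, ∑ h ∈ A, ‖∑ n ∈ Ioc N k, a h n‖ ≤ M) :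
    ‖∑ h ∈ A, ∑ n ∈ Ioc N m, a h n * eWeight h (δ n)‖ ≤ M * δ (N + 1) :=
  norm_sum_sum_Ioc_mul_le A a (fun h n => eWeight h (δ n)) δ hNm M hδ₀ hδ
    (fun h hh => (norm_eWeight_le (hA h hh) _).trans_eq (abs_of_nonneg hδ₀))
    (fun h hh k hk => (norm_eWeight_sub_le (hA h hh) _ _).trans_eq
      (abs_of_nonneg (sub_nonneg.mpr (hδ k hk)))) hM

end ExponentialPhases

theorem sum_filter_ne_zero_Icc_floor {M : Type*} [AddCommMonoid M] (H : ℝ) (g : ℤ → M) :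
    ∑ h ∈ (Icc (-⌊H⌋) ⌊H⌋).filter (fun h : ℤ => h ≠ 0), g h =
      ∑ n ∈ Icc 1 ⌊H⌋₊, (g n + g (-n)) := by
  have hfloor := Int.floor_toNat H
  have hsplit : (Icc (-⌊H⌋) ⌊H⌋).filter (fun h : ℤ => h ≠ 0) =
      (Icc 1 ⌊H⌋₊).image (fun n : ℕ => (n : ℤ)) ∪ (Icc 1 ⌊H⌋₊).image (fun n : ℕ => -(n : ℤ)) := by
    ext h
    simp only [mem_filter, mem_Icc, mem_union, mem_image]
    constructor
    · intro hh
      rcases lt_or_gt_of_ne hh.2 with hneg | hpos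
      · exact Or.inr ⟨(-h).toNat, by omega, by omega⟩
      · exact Or.inl ⟨h.toNat, by omega, by omega⟩
    · rintro (⟨n, hn, rfl⟩ | ⟨n, hn, rfl⟩) <;> omega
  rw [hsplit, sum_union, sum_image, sum_image, sum_add_distrib]
  · intro a _ b _ hab; simpa using hab
  · intro a _ b _ hab; simpa using hab
  · simp only [disjoint_left, mem_image]
    rintro _ ⟨a, ha, rfl⟩ ⟨b, hb, hab⟩
    simp only [mem_Icc] at ha hb
    omega

theorem sum_mul_sum_one_div_mul_e_sub_e (s : Finset ℕ) (A : Finset ℤ) (a : ℕ → ℂ) (F : ℝ → ℝ) :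
    ∑ n ∈ s, a n * ∑ h ∈ A, 1 / (2 * (π : ℂ) * Complex.I * h) * (e (h * F n) - e (h * F (n + 1))) =
      ∑ h ∈ A, ∑ n ∈ s, a n * e (h * F n) * eWeight h (F (n + 1) - F n) := by
  simp_rw [one_div_mul_e_sub_e, mul_sum, ← mul_assoc]
  exact sum_comm

theorem sum_filter_ne_zero_norm_sum_ofReal_mul_e (H : ℝ) (s : Finset ℕ) (a φ : ℕ → ℝ) :
    ∑ h ∈ (Icc (-⌊H⌋) ⌊H⌋).filter (fun h : ℤ => h ≠ 0), ‖∑ n ∈ s, (a n : ℂ) * e (h * φ n)‖ =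
      2 * ∑ h ∈ Icc 1 ⌊H⌋₊, ‖∑ n ∈ s, (a n : ℂ) * e (h * φ n)‖ := by
  rw [sum_filter_ne_zero_Icc_floor, mul_sum]
  refine sum_congr rfl fun h _ => ?_
  push_cast
  rw [norm_sum_ofReal_mul_e_neg_mul]
  ring

/-- `|Σ₁| ≤ (C / log N) · max_{N < N₂ ≤ 2N} ∑_{1 ≤ h ≤ H} |∑_{N < n ≤ N₂} Λ(n) e(h Li n)|`. -/
theorem sigma_one_bound :
    ∃ C : ℝ, 0 < C ∧ ∀ N : ℕ, ∀ hN : 2 ≤ N, ∀ H : ℝ, 1 ≤ H → ∀ N₁ : ℕ, N < N₁ → N₁ ≤ 2 * N →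
      ‖∑ n ∈ Finset.Ioc N N₁, (Λ n : ℂ) *
          ∑ h ∈ (Finset.Icc (-⌊H⌋) ⌊H⌋).filter (fun h : ℤ => h ≠ 0),
            (1 / (2 * (Real.pi : ℂ) * Complex.I * h)) *
              (e ((h : ℝ) * Li n) - e ((h : ℝ) * Li ((n : ℝ) + 1)))‖ ≤
        C / Real.log N *
          ((Finset.Ioc N (2 * N)).sup'
            (Finset.nonempty_Ioc.mpr (by omega))
            (fun N₂ => ∑ h ∈ Finset.Icc 1 ⌊H⌋₊,
              ‖∑ n ∈ Finset.Ioc N N₂, (Λ n : ℂ) * e ((h : ℝ) * Li n)‖)) := by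
  refine ⟨2, two_pos, fun N hN H _ N₁ hN₁ hN₁N => ?_⟩
  set g : ℕ → ℝ := fun N₂ =>
    ∑ h ∈ Icc 1 ⌊H⌋₊, ‖∑ n ∈ Ioc N N₂, (Λ n : ℂ) * e ((h : ℝ) * Li n)‖
  set M := (Ioc N (2 * N)).sup' (nonempty_Ioc.mpr (by omega)) g
  set δ : ℕ → ℝ := fun n => Li ((n : ℝ) + 1) - Li n
  have two_le : ∀ n, N ≤ n → (2 : ℝ) ≤ n := fun n hn => by exact_mod_cast hN.trans hn
  have hδ : ∀ k ∈ Ioc N N₁, δ (k + 1) ≤ δ k := fun k hk => by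
    have hk2 := two_le k (mem_Ioc.mp hk).1.le
    simpa only [δ, Nat.cast_succ] using
      antitoneOn_Li_add_one_sub_Li hk2 (show (2 : ℝ) ≤ k + 1 by linarith) (by linarith)
  have hM : ∀ k ∈ Ioc N N₁, ∑ h ∈ (Icc (-⌊H⌋) ⌊H⌋).filter (fun h : ℤ => h ≠ 0),
      ‖∑ n ∈ Ioc N k, (Λ n : ℂ) * e (h * Li n)‖ ≤ 2 * M := fun k hk => by
    rw [sum_filter_ne_zero_norm_sum_ofReal_mul_e H _ (fun n => Λ n) (fun n => Li n)]
    exact mul_le_mul_of_nonneg_left (le_sup' g (Ioc_subset_Ioc_right hN₁N hk)) zero_le_two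
  have hδN : δ (N + 1) ≤ 1 / Real.log N :=
    (Li_add_one_sub_Li_le (two_le _ N.le_succ)).trans <|
      antitoneOn_one_div_log (two_le N le_rfl) (two_le _ N.le_succ) (by simp)
  rw [sum_mul_sum_one_div_mul_e_sub_e]
  calc _ ≤ 2 * M * δ (N + 1) :=
        norm_sum_sum_Ioc_mul_eWeight_le _ (fun h hh => (mem_filter.mp hh).2) _ δ hN₁ _
          (Li_add_one_sub_Li_nonneg (two_le _ (by omega))) hδ hM
    _ ≤ 2 * M * (1 / Real.log N) := by
        refine mul_le_mul_of_nonneg_left hδN ?_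
        exact (sum_nonneg fun _ _ => norm_nonneg _).trans (hM N₁ (right_mem_Ioc.mpr hN₁))
    _ = 2 / Real.log N * M := by ring
end
end

section
/- (Vaughan's identity) Let u, v be positive integers. For every integer n > v, Λ(n) = ∑_{kℓ = n, k > v, ℓ > u} Λ(k) ( ∑_{d | ℓ, d > u} μ(d) ) + ∑_{kℓ = n, ℓ ≤ u} μ(ℓ) log k − ∑_{kℓm = n, ℓ ≤ v, m ≤ u} Λ(ℓ) μ(m), where all sums run over positive integers. -/
/-!
Split `Λ = Λ_{≤v} + Λ_{>v}` and `μ = μ_{≤u} + μ_{>u}`. Since `μ * 1 = δ`,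
`Λ_{>v} = Λ_{>v} * μ_{>u} * 1 + Λ_{>v} * 1 * μ_{≤u}`, and `Λ_{>v} * 1 = Λ * 1 - Λ_{≤v} * 1`
with `Λ * 1 = log`. Evaluating this Dirichlet-convolution identity at `n > v`, where
`Λ_{>v}(n) = Λ(n)`, gives the three sums.
-/

open Real Finset ArithmeticFunction ArithmeticFunction.Moebius
open scoped ArithmeticFunction.zeta

theorem vaughan_decomposition {A : Type*} [CommRing A] {a a₁ a₂ m₁ m₂ z : A}
    (ha : a₂ + a₁ = a) (hm : (m₁ + m₂) * z = 1) :
    a₁ + z * (a₂ * m₁) = a₁ * (m₂ * z) + a * z * m₁ := by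
  linear_combination (-a₁) * hm + z * m₁ * ha

namespace ArithmeticFunction

variable {R : Type*}

section Restrict

variable [Zero R]

def restrict (f : ArithmeticFunction R) (p : ℕ → Prop) [DecidablePred p] :
    ArithmeticFunction R :=
  ⟨fun n => if p n then f n else 0, by simp⟩

@[simp]
theorem restrict_apply (f : ArithmeticFunction R) (p : ℕ → Prop) [DecidablePred p] (n : ℕ) :
    f.restrict p n = if p n then f n else 0 :=
  rfl

end Restrict

theorem restrict_le_add_restrict_lt [AddMonoid R] (f : ArithmeticFunction R) (u : ℕ) :
    f.restrict (· ≤ u) + f.restrict (u < ·) = f := by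
  ext n
  rcases le_or_gt n u with h | h
  · simp [h, h.not_gt]
  · simp [h, h.not_ge]

section Semiring

variable [Semiring R]

theorem mul_restrict_apply (f g : ArithmeticFunction R) (p : ℕ → Prop) [DecidablePred p]
    (n : ℕ) :
    (f * g.restrict p) n = ∑ x ∈ n.divisorsAntidiagonal with p x.2, f x.1 * g x.2 := by
  simp [mul_apply, sum_filter]

theorem restrict_mul_restrict_apply (f g : ArithmeticFunction R) (p q : ℕ → Prop)
    [DecidablePred p] [DecidablePred q] (n : ℕ) :
    (f.restrict p * g.restrict q) n =
      ∑ x ∈ n.divisorsAntidiagonal with p x.1 ∧ q x.2, f x.1 * g x.2 := by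
  simp only [mul_apply, restrict_apply, ite_zero_mul_ite_zero, sum_filter]

theorem restrict_mul_zeta_apply (f : ArithmeticFunction R) (p : ℕ → Prop) [DecidablePred p]
    (n : ℕ) :
    (f.restrict p * ζ) n = ∑ d ∈ n.divisors with p d, f d := by
  rw [coe_mul_zeta_apply, sum_filter]
  rfl

theorem restrict_lt_mul_zeta_restrict_lt (f : ArithmeticFunction R) (u : ℕ) :
    (f.restrict (u < ·) * ζ).restrict (u < ·) = f.restrict (u < ·) * ζ := by
  ext n
  rw [restrict_apply, ite_eq_left_iff, not_lt, restrict_mul_zeta_apply]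
  intro hn
  refine (sum_eq_zero fun d hd => ?_).symm
  have := Nat.divisor_le (mem_filter.1 hd).1
  have := (mem_filter.1 hd).2
  omega

theorem coe_zeta_mul_apply_eq_sum_divisorsAntidiagonal (f : ArithmeticFunction R) (n : ℕ) :
    (ζ * f) n = ∑ x ∈ n.divisorsAntidiagonal, f x.2 := by
  rw [coe_zeta_mul_apply, Nat.sum_divisorsAntidiagonal' fun _ d => f d]

end Semiring

end ArithmeticFunction

theorem vaughan_identity_general (u v : ℕ) (n : ℕ) (hn : v < n) :
    Λ n =
      (∑ p ∈ n.divisorsAntidiagonal.filter (fun p => v < p.1 ∧ u < p.2),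
        Λ p.1 * (∑ d ∈ p.2.divisors.filter (fun d => u < d), (μ d : ℝ)))
      + (∑ p ∈ n.divisorsAntidiagonal.filter (fun p => p.2 ≤ u),
          (μ p.2 : ℝ) * Real.log p.1)
      - (∑ p ∈ n.divisorsAntidiagonal,
          ∑ q ∈ p.2.divisorsAntidiagonal.filter (fun q => q.1 ≤ v ∧ q.2 ≤ u),
            Λ q.1 * (μ q.2 : ℝ)) := by
  have hμ : ((μ : ArithmeticFunction ℝ).restrict (· ≤ u) +
      (μ : ArithmeticFunction ℝ).restrict (u < ·)) * ζ = 1 := by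
    rw [restrict_le_add_restrict_lt, coe_moebius_mul_coe_zeta]
  have h := congrArg (· n)
    (vaughan_decomposition (restrict_le_add_restrict_lt (Λ : ArithmeticFunction ℝ) v) hμ)
  simp only [ArithmeticFunction.add_apply] at h
  rw [restrict_apply, if_pos hn, ← restrict_lt_mul_zeta_restrict_lt, restrict_mul_restrict_apply,
    coe_zeta_mul_apply_eq_sum_divisorsAntidiagonal, vonMangoldt_mul_zeta, mul_restrict_apply] at h
  simp only [restrict_mul_restrict_apply, restrict_mul_zeta_apply, intCoe_apply, log_apply,
    mul_comm (Real.log _)] at h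
  linarith

/-- Vaughan's identity. -/
theorem vaughan_identity (u v : ℕ) (hu : 0 < u) (hv : 0 < v) (n : ℕ) (hn : v < n) :
    Λ n =
      (∑ p ∈ n.divisorsAntidiagonal.filter (fun p => v < p.1 ∧ u < p.2),
        Λ p.1 * (∑ d ∈ p.2.divisors.filter (fun d => u < d), (μ d : ℝ)))
      + (∑ p ∈ n.divisorsAntidiagonal.filter (fun p => p.2 ≤ u),
          (μ p.2 : ℝ) * Real.log p.1)
      - (∑ p ∈ n.divisorsAntidiagonal,
          ∑ q ∈ p.2.divisorsAntidiagonal.filter (fun q => q.1 ≤ v ∧ q.2 ≤ u),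
            Λ q.1 * (μ q.2 : ℝ)) :=
  vaughan_identity_general u v n hn
end
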